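/- Let ℓ > 1, let (P,≻,q) be a problem, and let P' be a Nash equilibrium of the game (GS^ℓ, P) with semi-sophisticated students. For each student i, let r_i be the number of competitive schools that i has dropped under P'_i but prefers (under P_i) to at least one of the top ℓ acceptable schools she lists under P'_i. Then GS^ℓ(P', ≻, q) = GS(P^k̄, ≻, q), where k̄_i = ℓ + r_i for each student i (i.e., the equilibrium outcome equals the deferred acceptance outcome when each student i reports the truncation P_i^{ℓ + r_i} of her true preferences). -/

import Mathlib

/-!
School choice framework following Bonkoungou–Nesterov,
"Reforms meet fairness concerns in school and college admissions".

Students `I` and schools `S` are finite types with `|I| > |S|`.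
A strict preference relation of a student over `S ∪ {∅}` is represented by a list
of `Option S` containing every element exactly once (earlier = more preferred);
`none` is the outside option.  A strict priority order of a school is a list of
`I` containing every student exactly once (earlier = higher priority).
-/

namespace SchoolChoice

variable {I S : Type*} [Fintype I] [DecidableEq I] [Fintype S] [DecidableEq S]

/-- `p` is a strict preference relation on `S ∪ {∅}`: a ranking list containing every
element of `Option S` exactly once. -/
def ValidPref (p : List (Option S)) : Prop := p.Nodup ∧ ∀ x : Option S, x ∈ p

/-- `pr` is a strict priority order: a ranking list containing every student exactly once. -/
def ValidPrio (pr : List I) : Prop := pr.Nodup ∧ ∀ i : I, i ∈ pr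

/-- `a` is strictly preferred to `b` under the preference relation `p`. -/
def prefLt (p : List (Option S)) (a b : Option S) : Prop := p.idxOf a < p.idxOf b

/-- `i` has strictly higher priority than `j` under the priority order `pr`. -/
def prioLt (pr : List I) (i j : I) : Prop := pr.idxOf i < pr.idxOf j

instance (p : List (Option S)) (a b : Option S) : Decidable (prefLt p a b) :=
  inferInstanceAs (Decidable (_ < _))

instance (pr : List I) (i j : I) : Decidable (prioLt pr i j) :=
  inferInstanceAs (Decidable (_ < _))

/-- The acceptable schools of `p` (those preferred to the outside option), in preference
order. -/
def acceptables (p : List (Option S)) : List S := (p.takeWhile Option.isSome).filterMap id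

/-- The truncation of `p` after its `k`-th acceptable school: the preference relation
listing, in the same order, only the `min k _` most-preferred acceptable schools of `p`,
all other schools being unacceptable (kept below `none` in their original order). -/
def truncate (p : List (Option S)) (k : ℕ) : List (Option S) :=
  ((acceptables p).take k).map some ++
    none :: p.filter (fun x => decide (x ≠ none ∧ x ∉ ((acceptables p).take k).map some))

/-- `μ` is a matching: it respects the capacities `q`. -/
def IsMatching (q : S → ℕ) (μ : I → Option S) : Prop :=
  ∀ s : S, (Finset.univ.filter (fun i => μ i = some s)).card ≤ q s

/-- The pair `(i, s)` blocks `μ` under the problem `(P, prio, q)`. -/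
def Blocks (P : I → List (Option S)) (prio : S → List I) (q : S → ℕ)
    (μ : I → Option S) (i : I) (s : S) : Prop :=
  prefLt (P i) (some s) (μ i) ∧
    ((Finset.univ.filter (fun j => μ j = some s)).card < q s ∨
      ∃ j : I, μ j = some s ∧ prioLt (prio s) i j)

/-- `i` is a blocking student for `μ` under `(P, prio, q)`. -/
def BlockingStudent (P : I → List (Option S)) (prio : S → List I) (q : S → ℕ)
    (μ : I → Option S) (i : I) : Prop :=
  ∃ s : S, Blocks P prio q μ i s

/-- `μ` is individually rational under `P`. -/
def IndividuallyRational (P : I → List (Option S)) (μ : I → Option S) : Prop :=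
  ∀ i : I, ¬ prefLt (P i) none (μ i)

/-- `μ` is stable at `(P, prio, q)`. -/
def IsStable (P : I → List (Option S)) (prio : S → List I) (q : S → ℕ)
    (μ : I → Option S) : Prop :=
  IndividuallyRational P μ ∧ ∀ i : I, ¬ BlockingStudent P prio q μ i

/-- The number of blocking students for `μ` under `(P, prio, q)`. -/
noncomputable def numBlocking (P : I → List (Option S)) (prio : S → List I) (q : S → ℕ)
    (μ : I → Option S) : ℕ :=
  {i : I | BlockingStudent P prio q μ i}.ncard

/-! ### The Gale–Shapley student-proposing deferred acceptance mechanism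

The state `σ : I → ℕ` records, for each student, how many of her acceptable schools
have already rejected her; she currently applies to the `σ i`-th school on her list
(if any).  At each round every school tentatively keeps the `q s` highest-priority
students among its current applicants and rejects the rest, who move on. -/

/-- The school student `i` currently applies to. -/
def daTarget (P : I → List (Option S)) (σ : I → ℕ) (i : I) : Option S :=
  (acceptables (P i))[σ i]?

/-- The students tentatively held by school `s`: the `q s` highest-priority current
applicants. -/
def daHeld (P : I → List (Option S)) (prio : S → List I) (q : S → ℕ)
    (σ : I → ℕ) (s : S) : List I :=
  ((prio s).filter (fun i => decide (daTarget P σ i = some s))).take (q s)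

/-- One round of deferred acceptance: every rejected student moves to her next choice. -/
def daStep (P : I → List (Option S)) (prio : S → List I) (q : S → ℕ)
    (σ : I → ℕ) : I → ℕ := fun i =>
  match daTarget P σ i with
  | none => σ i
  | some s => if i ∈ daHeld P prio q σ s then σ i else σ i + 1

/-- The Gale–Shapley (student-proposing deferred acceptance) mechanism.  Iterating the
round map `|I| * |S| + 1` times is guaranteed to reach the terminal state. -/
def GS (P : I → List (Option S)) (prio : S → List I) (q : S → ℕ) : I → Option S :=
  fun i =>
    let σ := (daStep P prio q)^[Fintype.card I * Fintype.card S + 1] (fun _ => 0)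
    match daTarget P σ i with
    | none => none
    | some s => if i ∈ daHeld P prio q σ s then some s else none

/-- The constrained Gale–Shapley mechanism `GS^k`. -/
def GSk (k : ℕ) (P : I → List (Option S)) (prio : S → List I) (q : S → ℕ) : I → Option S :=
  GS (fun i => truncate (P i) k) prio q

/-! ### The Boston (immediate acceptance) mechanism -/

/-- Round `t` of the Boston mechanism: each not-yet-accepted student applies to her
`t`-th ranked acceptable school (0-indexed), and each school permanently accepts, up to
its remaining capacity, its highest-priority new applicants. -/
def bostonRound (P : I → List (Option S)) (prio : S → List I) (q : S → ℕ)
    (μ : I → Option S) (t : ℕ) : I → Option S := fun i =>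
  match μ i with
  | some s => some s
  | none =>
    match (acceptables (P i))[t]? with
    | none => none
    | some s =>
      if i ∈ ((prio s).filter
            (fun j => decide (μ j = none ∧ (acceptables (P j))[t]? = some s))).take
          (q s - (Finset.univ.filter (fun j => μ j = some s)).card)
      then some s else none

/-- The Boston (immediate acceptance) mechanism. -/
def Boston (P : I → List (Option S)) (prio : S → List I) (q : S → ℕ) : I → Option S :=
  (List.range (Fintype.card S)).foldl (bostonRound P prio q) (fun _ => none)

/-- The constrained Boston mechanism `β^k`. -/
def Bostonk (k : ℕ) (P : I → List (Option S)) (prio : S → List I) (q : S → ℕ) :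
    I → Option S :=
  Boston (fun i => truncate (P i) k) prio q

/-! ### The first-preference-first mechanism -/

/-- The adjusted priority profile: each first-preference-first school (member of `fpf`)
ranks students first by the rank they assign to it under `P` (counting the ranking of the
outside option as well), ties broken by the original priority; equal-preference schools
keep their original priority. -/
def fpfPrio (fpf : Finset S) (P : I → List (Option S)) (prio : S → List I) : S → List I :=
  fun s =>
    if s ∈ fpf then
      (List.range (Fintype.card S + 1)).flatMap
        (fun r => (prio s).filter (fun i => decide ((P i).idxOf (some s) = r)))
    else prio s

/-- The first-preference-first mechanism with set `fpf` of first-preference-first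
schools: Gale–Shapley run on the adjusted priorities. -/
def FPF (fpf : Finset S) (P : I → List (Option S)) (prio : S → List I) (q : S → ℕ) :
    I → Option S :=
  GS P (fpfPrio fpf P prio) q

/-- The constrained first-preference-first mechanism `FPF^k`. -/
def FPFk (fpf : Finset S) (k : ℕ) (P : I → List (Option S)) (prio : S → List I)
    (q : S → ℕ) : I → Option S :=
  FPF fpf (fun i => truncate (P i) k) prio q

/-! ### Manipulation and equilibrium notions -/

/-- Student `i` is a manipulating student of the mechanism `φ` (with priorities and
capacities fixed) at the true profile `P`. -/
def ManipulatingStudent (φ : (I → List (Option S)) → I → Option S)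
    (P : I → List (Option S)) (i : I) : Prop :=
  ∃ Q : List (Option S), ValidPref Q ∧
    prefLt (P i) (φ (Function.update P i Q) i) (φ P i)

/-- The mechanism `φ` is not manipulable at `P`. -/
def NotManipulable (φ : (I → List (Option S)) → I → Option S)
    (P : I → List (Option S)) : Prop :=
  ∀ i : I, ¬ ManipulatingStudent φ P i

/-- `P'` is a Nash equilibrium of the game `(φ, P)` in which the sophisticated students
are the members of `M` (who may misreport, and best respond) and all other (sincere)
students report truthfully. -/
def NashEq (φ : (I → List (Option S)) → I → Option S) (P : I → List (Option S))
    (M : Finset I) (P' : I → List (Option S)) : Prop :=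
  (∀ i, ValidPref (P' i)) ∧ (∀ i ∉ M, P' i = P i) ∧
    ∀ i ∈ M, ∀ Q : List (Option S), ValidPref Q →
      ¬ prefLt (P i) (φ (Function.update P' i Q) i) (φ P' i)

/-! ### Semi-sophisticated students -/

/-- Student `i` is guaranteed her first choice `s`: `s` is her most-preferred acceptable
school and `i` is among the `q s` highest-priority students at `s`. -/
def GuaranteedFirstChoice (P : I → List (Option S)) (prio : S → List I) (q : S → ℕ)
    (i : I) (s : S) : Prop :=
  (acceptables (P i)).head? = some s ∧ (prio s).idxOf i < q s

instance (P : I → List (Option S)) (prio : S → List I) (q : S → ℕ) (i : I) (s : S) :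
    Decidable (GuaranteedFirstChoice P prio q i s) :=
  inferInstanceAs (Decidable (_ ∧ _))

/-- School `s` is competitive: at least `q s` students are guaranteed their first
choice `s`. -/
def Competitive (P : I → List (Option S)) (prio : S → List I) (q : S → ℕ) (s : S) : Prop :=
  q s ≤ (Finset.univ.filter (fun i => GuaranteedFirstChoice P prio q i s)).card

instance (P : I → List (Option S)) (prio : S → List I) (q : S → ℕ) (s : S) :
    Decidable (Competitive P prio q s) :=
  inferInstanceAs (Decidable (_ ≤ _))

/-- `P'` is a Nash equilibrium of the game `(GS^ℓ, P)` with semi-sophisticated students: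
every student guaranteed her first choice reports truthfully; every other student reports
truthfully if she has at most `ℓ` acceptable schools or all her acceptable schools are
competitive, and otherwise lists as acceptable, in the order given by her true preference,
only her acceptable schools that are not competitive. -/
def SemiSophProfile (ℓ : ℕ) (P : I → List (Option S)) (prio : S → List I) (q : S → ℕ)
    (P' : I → List (Option S)) : Prop :=
  ∀ i : I,
    ((∃ s : S, GuaranteedFirstChoice P prio q i s) → P' i = P i) ∧
    (¬ (∃ s : S, GuaranteedFirstChoice P prio q i s) →
      (((acceptables (P i)).length ≤ ℓ ∨ ∀ s ∈ acceptables (P i), Competitive P prio q s) →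
          P' i = P i) ∧
      (¬ ((acceptables (P i)).length ≤ ℓ ∨
            ∀ s ∈ acceptables (P i), Competitive P prio q s) →
          acceptables (P' i) =
            (acceptables (P i)).filter (fun s => decide (¬ Competitive P prio q s))))


/-!
After truncation, each equilibrium report `P'ᵢ^ℓ` is `Pᵢ^(ℓ + rᵢ)` with its competitive schools
removed: the first `ℓ` non-competitive schools of `Pᵢ` are the non-competitive schools among
its first `ℓ + rᵢ`. A fair matching (individually rational, feasible, without justified envy)
gives a competitive school `s` only to students among its top `q s`; these are guaranteed their
first choice, hence truthful, and are not the students who drop `s`. So the deferred acceptance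
outcome of each of the two profiles is fair for the other, and as deferred acceptance yields the
student-optimal fair matching, the two outcomes coincide.
-/

section Lists

open List

variable {α : Type*} [DecidableEq α]

theorem _root_.List.Sublist.idxOf_le_idxOf_iff {l₁ l₂ : List α} (h : l₁ <+ l₂) (hl₂ : l₂.Nodup)
    {x y : α} (hx : x ∈ l₁) (hy : y ∈ l₁) :
    l₁.idxOf x ≤ l₁.idxOf y ↔ l₂.idxOf x ≤ l₂.idxOf y := by
  induction h with
  | slnil => simp
  | cons a h ih =>
    have ha := (nodup_cons.1 hl₂).1
    have hxa : a ≠ x := fun e => ha (e ▸ h.subset hx)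
    have hya : a ≠ y := fun e => ha (e ▸ h.subset hy)
    rw [idxOf_cons_ne _ hxa, idxOf_cons_ne _ hya, Nat.succ_le_succ_iff]
    exact ih (nodup_cons.1 hl₂).2 hx hy
  | cons_cons a h ih =>
    have ha := (nodup_cons.1 hl₂).1
    by_cases hxa : x = a
    · simp [hxa]
    by_cases hya : y = a
    · simp [hya, idxOf_cons_ne _ (Ne.symm hxa)]
    have hx' := (mem_cons.1 hx).resolve_left hxa
    have hy' := (mem_cons.1 hy).resolve_left hya
    rw [idxOf_cons_ne _ (Ne.symm hxa), idxOf_cons_ne _ (Ne.symm hya),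
      idxOf_cons_ne _ (Ne.symm hxa), idxOf_cons_ne _ (Ne.symm hya), Nat.succ_le_succ_iff,
      Nat.succ_le_succ_iff]
    exact ih (nodup_cons.1 hl₂).2 hx' hy'

theorem _root_.List.Sublist.idxOf_lt_idxOf_iff {l₁ l₂ : List α} (h : l₁ <+ l₂) (hl₂ : l₂.Nodup)
    {x y : α} (hx : x ∈ l₁) (hy : y ∈ l₁) :
    l₁.idxOf x < l₁.idxOf y ↔ l₂.idxOf x < l₂.idxOf y := by
  simpa only [not_le] using (h.idxOf_le_idxOf_iff hl₂ hy hx).not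

theorem _root_.List.getElem?_eq_some_iff_of_nodup {l : List α} (hl : l.Nodup) {n : ℕ} {a : α} :
    l[n]? = some a ↔ a ∈ l ∧ l.idxOf a = n := by
  constructor
  · intro h
    obtain ⟨hn, rfl⟩ := List.getElem?_eq_some_iff.1 h
    exact ⟨getElem_mem hn, hl.idxOf_getElem n hn⟩
  · rintro ⟨ha, rfl⟩
    exact getElem?_idxOf ha

theorem _root_.List.filter_precedes_cons (C : α → Prop) [DecidablePred C] {a : α} {L X : List α}
    (ha : a ∉ L) (hX : ∀ x ∈ X, x ∈ L) :
    L.filter (fun s => C s ∧ ∃ s' ∈ X, (a :: L).idxOf s < (a :: L).idxOf s') =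
      L.filter (fun s => C s ∧ ∃ s' ∈ X, L.idxOf s < L.idxOf s') := by
  have hne : ∀ {s}, s ∈ L → a ≠ s := fun hs e => ha (e ▸ hs)
  refine filter_congr fun s hs => decide_eq_decide.2 <| and_congr_right fun _ =>
    exists_congr fun s' => and_congr_right fun hs' => ?_
  rw [idxOf_cons_ne _ (hne hs), idxOf_cons_ne _ (hne (hX s' hs')), Nat.succ_lt_succ_iff]

/-- To see the first `l` elements of `L` outside `C` one reads `L` up to the `l`-th of them,
meeting on the way exactly the elements of `C` that precede one of them. -/
theorem _root_.List.take_filter_eq_filter_take_add (C : α → Prop) [DecidablePred C] {L : List α}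
    (hL : L.Nodup) (l : ℕ) :
    (L.filter (fun s => ¬ C s)).take l =
      (L.take (l + (L.filter (fun s => C s ∧ ∃ s' ∈ (L.filter (fun s => ¬ C s)).take l,
        L.idxOf s < L.idxOf s')).length)).filter (fun s => ¬ C s) := by
  induction L generalizing l with
  | nil => simp
  | cons a L ih =>
    obtain ⟨ha, hL⟩ := nodup_cons.1 hL
    have hN : ∀ {k}, ∀ x ∈ (L.filter (fun s => ¬ C s)).take k, x ∈ L :=
      fun _ h => mem_of_mem_filter (take_subset _ _ h)
    by_cases hCa : C a
    · rw [filter_cons_of_neg (by simpa using hCa)]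
      by_cases hnil : (L.filter (fun s => ¬ C s)).take l = []
      · simp only [hnil, not_mem_nil, false_and, exists_false, and_false, decide_false,
          filter_false, length_nil, Nat.add_zero]
        rcases take_eq_nil_iff.1 hnil with rfl | hnil
        · simp
        refine (filter_eq_nil_iff.2 fun x hx => ?_).symm
        rcases mem_cons.1 (take_subset _ _ hx) with rfl | hx
        · simpa using hCa
        · simpa using filter_eq_nil_iff.1 hnil x hx
      obtain ⟨s', hs'⟩ := exists_mem_of_ne_nil _ hnil
      have ha_first : (a :: L).idxOf a < (a :: L).idxOf s' := by
        rw [idxOf_cons_self, idxOf_cons_ne _ (by rintro rfl; exact ha (hN _ hs'))]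
        exact Nat.succ_pos _
      rw [filter_cons, if_pos (decide_eq_true ⟨hCa, s', hs', ha_first⟩), length_cons,
        filter_precedes_cons C ha hN, ← Nat.add_assoc, take_succ_cons,
        filter_cons_of_neg (by simpa using hCa)]
      exact ih hL l
    · rw [filter_cons_of_pos (by simpa using hCa)]
      cases l with
      | zero => simp
      | succ k =>
        rw [take_succ_cons]
        have hcount : (a :: L).filter (fun s => C s ∧
              ∃ s' ∈ a :: (L.filter (fun s => ¬ C s)).take k,
                (a :: L).idxOf s < (a :: L).idxOf s') =
            L.filter (fun s => C s ∧ ∃ s' ∈ (L.filter (fun s => ¬ C s)).take k,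
              (a :: L).idxOf s < (a :: L).idxOf s') := by
          rw [filter_cons_of_neg (by simp [hCa])]
          refine filter_congr fun s _ => ?_
          simp
        rw [hcount, filter_precedes_cons C ha hN, Nat.add_right_comm, take_succ_cons,
          filter_cons_of_pos (by simpa using hCa)]
        exact congrArg (a :: ·) (ih hL k)

end Lists

open Function in
theorem _root_.Function.isFixedPt_iterate_of_potential {α : Type*} {f : α → α} (Φ : α → ℕ) {B : ℕ}
    (x : α) (hΦ : ∀ y, ¬ IsFixedPt f y → Φ y < Φ (f y)) (hB : ∀ n, Φ (f^[n] x) ≤ B) :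
    IsFixedPt f (f^[B + 1] x) := by
  by_contra hfix
  have hgrow : ∀ n ≤ B + 1, n ≤ Φ (f^[n] x) := by
    intro n
    induction n with
    | zero => exact fun _ => Nat.zero_le _
    | succ n ih =>
      intro hn
      have hnfix : ¬ IsFixedPt f (f^[n] x) := fun h => hfix <| by
        rw [show B + 1 = (B + 1 - n) + n by omega, iterate_add_apply, iterate_fixed h]
        exact h
      calc n + 1 ≤ Φ (f^[n] x) + 1 := Nat.succ_le_succ (ih (by omega))
        _ ≤ Φ (f (f^[n] x)) := hΦ _ hnfix
        _ = Φ (f^[n + 1] x) := by rw [iterate_succ_apply']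
  exact absurd (hgrow (B + 1) le_rfl) (by linarith [hB (B + 1)])

section Acceptables

variable {S : Type*}

@[simp] theorem acceptables_nil : acceptables ([] : List (Option S)) = [] := rfl

@[simp] theorem acceptables_none_cons (p : List (Option S)) : acceptables (none :: p) = [] := rfl

@[simp] theorem acceptables_some_cons (s : S) (p : List (Option S)) :
    acceptables (some s :: p) = s :: acceptables p := rfl

theorem acceptables_map_some_append_none_cons (xs : List S) (p : List (Option S)) :
    acceptables (xs.map some ++ none :: p) = xs := by
  induction xs with
  | nil => rfl
  | cons s xs ih => simp [ih]

theorem acceptables_truncate [DecidableEq S] (p : List (Option S)) (k : ℕ) :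
    acceptables (truncate p k) = (acceptables p).take k :=
  acceptables_map_some_append_none_cons _ _

theorem nodup_acceptables {p : List (Option S)} (hp : p.Nodup) : (acceptables p).Nodup :=
  ((List.takeWhile_sublist _).nodup hp).filterMap fun _ _ _ h h' => h.trans h'.symm

theorem idxOf_some_eq_idxOf_acceptables [DecidableEq S] {p : List (Option S)} {s : S}
    (hs : s ∈ acceptables p) : p.idxOf (some s) = (acceptables p).idxOf s := by
  induction p with
  | nil => simp at hs
  | cons x p ih =>
    rcases x with _ | b
    · simp at hs
    by_cases hb : b = s
    · simp [hb]
    · simp only [acceptables_some_cons, List.mem_cons, Ne.symm hb, false_or] at hs ⊢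
      rw [List.idxOf_cons_ne _ (by simpa using hb), List.idxOf_cons_ne _ hb, ih hs]

theorem prefLt_some_iff [DecidableEq S] {p : List (Option S)} {s s' : S} (hs : s ∈ acceptables p)
    (hs' : s' ∈ acceptables p) :
    prefLt p (some s) (some s') ↔ (acceptables p).idxOf s < (acceptables p).idxOf s' := by
  rw [prefLt, idxOf_some_eq_idxOf_acceptables hs, idxOf_some_eq_idxOf_acceptables hs']

end Acceptables

section Fairness

variable {I S : Type*} [Fintype I] [DecidableEq I] [DecidableEq S]

theorem IsMatching.exists_ne_of_le_card {q : S → ℕ} {μ : I → Option S} (hμ : IsMatching q μ)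
    {s : S} {H : Finset I} (hH : q s ≤ H.card) {k : I} (hk : k ∉ H) (hks : μ k = some s) :
    ∃ j ∈ H, μ j ≠ some s := by
  by_contra! hall
  have hsub : insert k H ⊆ Finset.univ.filter (fun j => μ j = some s) := by
    intro j hj
    rcases Finset.mem_insert.1 hj with rfl | hj
    · simpa using hks
    · simpa using hall j hj
  have := Finset.card_le_card hsub
  rw [Finset.card_insert_of_notMem hk] at this
  have := hμ s
  omega

/-- Individually rational, feasible and free of justified envy, with preferences compared by
position in the list of acceptable schools. -/
structure IsFair (P : I → List (Option S)) (prio : S → List I) (q : S → ℕ)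
    (μ : I → Option S) : Prop where
  mem_acceptables {i : I} {s : S} : μ i = some s → s ∈ acceptables (P i)
  isMatching : IsMatching q μ
  noEnvy {i k : I} {s : S} : s ∈ acceptables (P i) →
    (∀ s₀, μ i = some s₀ → (acceptables (P i)).idxOf s < (acceptables (P i)).idxOf s₀) →
    μ k = some s → (prio s).idxOf k < (prio s).idxOf i

theorem IsFair.idxOf_lt_of_competitive {P : I → List (Option S)} {prio : S → List I}
    {q : S → ℕ} {μ : I → Option S} (hμ : IsFair P prio q μ) {s : S}
    (hs : Competitive P prio q s) {k : I} (hk : μ k = some s) : (prio s).idxOf k < q s := by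
  by_contra hk'
  have hkG : k ∉ Finset.univ.filter (fun j => GuaranteedFirstChoice P prio q j s) :=
    fun h => hk' (Finset.mem_filter.1 h).2.2
  obtain ⟨j, hjG, hj⟩ := hμ.isMatching.exists_ne_of_le_card hs hkG hk
  obtain ⟨hhead, hjtop⟩ := (Finset.mem_filter.1 hjG).2
  obtain ⟨t, ht⟩ := List.head?_eq_some_iff.1 hhead
  have hsj : s ∈ acceptables (P j) := by simp [ht]
  have hpref : ∀ s₀, μ j = some s₀ →
      (acceptables (P j)).idxOf s < (acceptables (P j)).idxOf s₀ := by
    intro s₀ h₀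
    rw [ht, List.idxOf_cons_self, List.idxOf_cons_ne _ (by rintro rfl; exact hj h₀)]
    exact Nat.succ_pos _
  have := hμ.noEnvy hsj hpref hk
  omega

end Fairness

section DeferredAcceptance

variable {I S : Type*} [DecidableEq S] {P : I → List (Option S)} {prio : S → List I}
  {q : S → ℕ}

theorem daTarget_of_mem_daHeld {σ : I → ℕ} {i : I} {s : S}
    (h : i ∈ daHeld P prio q σ s) : daTarget P σ i = some s :=
  of_decide_eq_true (List.mem_filter.1 (List.take_subset _ _ h)).2

theorem nodup_daHeld {σ : I → ℕ} {s : S} (h : (prio s).Nodup) :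
    (daHeld P prio q σ s).Nodup :=
  ((List.take_sublist _ _).trans List.filter_sublist).nodup h

theorem daTarget_of_eq_idxOf {σ : I → ℕ} {i : I} {s : S} (hs : s ∈ acceptables (P i))
    (h : σ i = (acceptables (P i)).idxOf s) : daTarget P σ i = some s := by
  rw [daTarget, h]
  exact List.getElem?_idxOf hs

variable [DecidableEq I]

variable (P prio q) in
def daRun (n : ℕ) : I → ℕ := (daStep P prio q)^[n] (fun _ => 0)

theorem daRun_succ (n : ℕ) :
    daRun P prio q (n + 1) = daStep P prio q (daRun P prio q n) :=
  Function.iterate_succ_apply' _ _ _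

theorem daStep_of_mem_daHeld {σ : I → ℕ} {i : I} {s : S} (h : i ∈ daHeld P prio q σ s) :
    daStep P prio q σ i = σ i := by
  simp [daStep, daTarget_of_mem_daHeld h, h]

theorem daStep_of_not_mem_daHeld {σ : I → ℕ} {i : I} {s : S} (ht : daTarget P σ i = some s)
    (h : i ∉ daHeld P prio q σ s) : daStep P prio q σ i = σ i + 1 := by
  simp [daStep, ht, h]

theorem le_daStep (σ : I → ℕ) (i : I) : σ i ≤ daStep P prio q σ i := by
  unfold daStep; split <;> [rfl; split] <;> omega

theorem daStep_le_succ (σ : I → ℕ) (i : I) : daStep P prio q σ i ≤ σ i + 1 := by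
  unfold daStep; split <;> [omega; split] <;> omega

theorem daStep_of_length_le {σ : I → ℕ} {i : I} (h : (acceptables (P i)).length ≤ σ i) :
    daStep P prio q σ i = σ i := by
  simp [daStep, daTarget, List.getElem?_eq_none h]

theorem daRun_le_length (n : ℕ) (i : I) : daRun P prio q n i ≤ (acceptables (P i)).length := by
  induction n with
  | zero => exact Nat.zero_le _
  | succ n ih =>
    rw [daRun_succ]
    rcases ih.lt_or_eq with h | h
    · exact (daStep_le_succ _ i).trans h
    · rw [daStep_of_length_le h.ge, h]


variable (P prio) in
def daAhead (σ : I → ℕ) (s : S) (i : I) : List I :=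
  ((prio s).take ((prio s).idxOf i)).filter (fun j => daTarget P σ j = some s)

theorem idxOf_lt_of_mem_daAhead {σ : I → ℕ} {s : S} {i j : I}
    (h : j ∈ daAhead P prio σ s i) :
    (prio s).idxOf j < (prio s).idxOf i ∧ daTarget P σ j = some s := by
  obtain ⟨hj, ht⟩ := List.mem_filter.1 h
  exact ⟨(List.mem_take_iff_idxOf_lt (List.take_subset _ _ hj)).1 hj, of_decide_eq_true ht⟩

theorem daHeld_eq_take_daAhead {σ : I → ℕ} {s : S} {i : I}
    (h : q s ≤ (daAhead P prio σ s i).length) :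
    daHeld P prio q σ s = (daAhead P prio σ s i).take (q s) := by
  unfold daHeld daAhead
  conv_lhs => rw [← List.take_append_drop ((prio s).idxOf i) (prio s), List.filter_append]
  exact List.take_append_of_le_length h

theorem le_length_daAhead_of_not_mem_daHeld {σ : I → ℕ} {s : S} {i : I} (hi : i ∈ prio s)
    (ht : daTarget P σ i = some s) (hrej : i ∉ daHeld P prio q σ s) :
    q s ≤ (daAhead P prio σ s i).length := by
  by_contra! hlt
  apply hrej
  have hdrop : (prio s).drop ((prio s).idxOf i) = i :: (prio s).drop ((prio s).idxOf i + 1) := by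
    rw [List.drop_eq_getElem_cons (List.idxOf_lt_length_of_mem hi), List.getElem_idxOf]
  have hsplit : (prio s).filter (fun j => daTarget P σ j = some s) =
      daAhead P prio σ s i ++
        i :: ((prio s).drop ((prio s).idxOf i + 1)).filter (fun j => daTarget P σ j = some s) := by
    rw [daAhead, ← List.filter_cons_of_pos (by simpa using ht), ← hdrop, ← List.filter_append,
      List.take_append_drop]
  obtain ⟨m, hm⟩ : ∃ m, q s - (daAhead P prio σ s i).length = m + 1 :=
    ⟨_, (Nat.succ_pred_eq_of_pos (by omega)).symm⟩
  rw [daHeld, hsplit, List.take_append, hm, List.take_succ_cons]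
  exact List.mem_append_right _ List.mem_cons_self

theorem le_length_daAhead_daStep {σ : I → ℕ} {s : S} {i : I}
    (h : q s ≤ (daAhead P prio σ s i).length) :
    q s ≤ (daAhead P prio (daStep P prio q σ) s i).length := by
  set A := daAhead P prio σ s i
  have hheld : (A.take (q s)).filter (fun j => daTarget P (daStep P prio q σ) j = some s) =
      A.take (q s) := by
    refine List.filter_eq_self.2 fun j hj => ?_
    rw [← daHeld_eq_take_daAhead h] at hj
    simpa [daTarget, daStep_of_mem_daHeld hj] using daTarget_of_mem_daHeld hj
  have hsub : (A.take (q s)).Sublist (daAhead P prio (daStep P prio q σ) s i) := by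
    rw [← hheld]
    exact ((List.take_sublist _ _).trans List.filter_sublist).filter _
  simpa [List.length_take, h] using hsub.length_le

theorem le_length_daAhead_daRun {s : S} {i : I} (hi : i ∈ prio s) (hs : s ∈ acceptables (P i))
    (n : ℕ) (h : (acceptables (P i)).idxOf s < daRun P prio q n i) :
    q s ≤ (daAhead P prio (daRun P prio q n) s i).length := by
  induction n with
  | zero => exact absurd h (Nat.not_lt_zero _)
  | succ n ih =>
    rw [daRun_succ] at h ⊢
    refine le_length_daAhead_daStep ?_
    rcases Nat.lt_or_ge ((acceptables (P i)).idxOf s) (daRun P prio q n i) with hlt | hge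
    · exact ih hlt
    · have hle := daStep_le_succ (P := P) (prio := prio) (q := q) (daRun P prio q n) i
      have ht := daTarget_of_eq_idxOf (σ := daRun P prio q n) hs (by omega)
      refine le_length_daAhead_of_not_mem_daHeld hi ht fun hheld => ?_
      rw [daStep_of_mem_daHeld hheld] at h
      omega

/-- Deferred acceptance never rejects a student from the school a fair matching gives her:
the first such rejection would leave that school holding `q s` students of higher priority,
one of whom is not matched to it by `μ` and so envies her. -/
theorem daRun_le_idxOf_of_isFair [Fintype I] (hprio : ∀ s, ValidPrio (prio s))
    (hnd : ∀ i, (acceptables (P i)).Nodup) {μ : I → Option S}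
    (hμ : IsFair P prio q μ) (n : ℕ) {i : I} {s : S} (hi : μ i = some s) :
    daRun P prio q n i ≤ (acceptables (P i)).idxOf s := by
  induction n generalizing i s with
  | zero => exact Nat.zero_le _
  | succ n ih =>
    rw [daRun_succ]
    rcases (ih hi).lt_or_eq with hlt | heq
    · exact (daStep_le_succ _ i).trans hlt
    have ht := daTarget_of_eq_idxOf (hμ.mem_acceptables hi) heq
    by_cases hheld : i ∈ daHeld P prio q (daRun P prio q n) s
    · rw [daStep_of_mem_daHeld hheld, heq]
    exfalso
    have hahead := le_length_daAhead_of_not_mem_daHeld ((hprio s).2 i) ht hheld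
    have hH := daHeld_eq_take_daAhead (q := q) hahead
    have hcard : q s ≤ (daHeld P prio q (daRun P prio q n) s).toFinset.card := by
      rw [List.toFinset_card_of_nodup (nodup_daHeld (hprio s).1), hH, List.length_take,
        min_eq_left hahead]
    obtain ⟨j, hjH, hj⟩ :=
      hμ.isMatching.exists_ne_of_le_card hcard (by simpa using hheld) hi
    rw [List.mem_toFinset] at hjH
    have hji : (prio s).idxOf j < (prio s).idxOf i :=
      (idxOf_lt_of_mem_daAhead (List.take_subset _ _ (hH ▸ hjH))).1
    obtain ⟨hsj, hjs⟩ :=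
      (List.getElem?_eq_some_iff_of_nodup (hnd j)).1 (daTarget_of_mem_daHeld hjH)
    have hpref : ∀ s₁, μ j = some s₁ →
        (acceptables (P j)).idxOf s < (acceptables (P j)).idxOf s₁ := by
      intro s₁ h₁
      have hne : (acceptables (P j)).idxOf s ≠ (acceptables (P j)).idxOf s₁ := fun e =>
        hj (((List.idxOf_inj hsj).1 e) ▸ h₁)
      have := ih h₁
      omega
    have := hμ.noEnvy hsj hpref hi
    omega

end DeferredAcceptance

section GaleShapley

variable {I S : Type*} [Fintype I] [DecidableEq I] [Fintype S] [DecidableEq S]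
  {P : I → List (Option S)} {prio : S → List I} {q : S → ℕ}

variable (P prio q) in
def daLimit : I → ℕ := daRun P prio q (Fintype.card I * Fintype.card S + 1)

/-- The number of rejections grows strictly until deferred acceptance stops, and it is at most
`|I| * |S|`. -/
theorem isFixedPt_daStep_daLimit (hnd : ∀ i, (acceptables (P i)).Nodup) :
    Function.IsFixedPt (daStep P prio q) (daLimit P prio q) := by
  refine Function.isFixedPt_iterate_of_potential (fun σ => ∑ i, σ i) _ (fun σ hσ => ?_)
    (fun n => ?_)
  · obtain ⟨i, hi⟩ := Function.ne_iff.1 hσ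
    exact Finset.sum_lt_sum (fun i _ => le_daStep σ i)
      ⟨i, Finset.mem_univ _, (le_daStep σ i).lt_of_ne' hi⟩
  · calc ∑ i, daRun P prio q n i ≤ ∑ _i : I, Fintype.card S :=
          Finset.sum_le_sum fun i _ => (daRun_le_length n i).trans (hnd i).length_le_card
      _ = Fintype.card I * Fintype.card S := by simp

theorem mem_daHeld_daLimit (hnd : ∀ i, (acceptables (P i)).Nodup) {i : I} {s : S}
    (ht : daTarget P (daLimit P prio q) i = some s) :
    i ∈ daHeld P prio q (daLimit P prio q) s := by
  by_contra h
  have := daStep_of_not_mem_daHeld ht h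
  rw [isFixedPt_daStep_daLimit hnd |>.eq] at this
  omega

theorem GS_eq_daTarget (hnd : ∀ i, (acceptables (P i)).Nodup) :
    GS P prio q = daTarget P (daLimit P prio q) := by
  funext i
  change (match daTarget P (daLimit P prio q) i with
    | none => none
    | some s => if i ∈ daHeld P prio q (daLimit P prio q) s then some s else none) = _
  rcases ht : daTarget P (daLimit P prio q) i with _ | s
  · rfl
  · simp [mem_daHeld_daLimit hnd ht]

theorem isFair_GS (hprio : ∀ s, ValidPrio (prio s)) (hnd : ∀ i, (acceptables (P i)).Nodup) :
    IsFair P prio q (GS P prio q) where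
  mem_acceptables {i s} h := by
    rw [GS_eq_daTarget hnd] at h
    exact List.mem_of_getElem? h
  isMatching s := by
    have hsub : Finset.univ.filter (fun j => GS P prio q j = some s) ⊆
        (daHeld P prio q (daLimit P prio q) s).toFinset := fun j hj => by
      rw [GS_eq_daTarget hnd] at hj
      simpa using mem_daHeld_daLimit hnd (Finset.mem_filter.1 hj).2
    calc _ ≤ _ := Finset.card_le_card hsub
      _ ≤ _ := List.toFinset_card_le _
      _ ≤ q s := List.length_take_le _ _
  noEnvy {i k s} hs hpref hk := by
    have hlt : (acceptables (P i)).idxOf s < daLimit P prio q i := by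
      rcases ht : daTarget P (daLimit P prio q) i with _ | s₀
      · exact (List.idxOf_lt_length_of_mem hs).trans_le (List.getElem?_eq_none_iff.1 ht)
      · rw [← (List.getElem?_eq_some_iff_of_nodup (hnd i)).1 ht |>.2]
        exact hpref s₀ (by rw [GS_eq_daTarget hnd, ht])
    have hahead : q s ≤ (daAhead P prio (daLimit P prio q) s i).length :=
      le_length_daAhead_daRun ((hprio s).2 i) hs _ hlt
    have hheld := mem_daHeld_daLimit hnd (by rwa [← GS_eq_daTarget hnd])
    rw [daHeld_eq_take_daAhead hahead] at hheld
    exact (idxOf_lt_of_mem_daAhead (List.take_subset _ _ hheld)).1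

theorem GS_le_of_isFair (hprio : ∀ s, ValidPrio (prio s)) (hnd : ∀ i, (acceptables (P i)).Nodup)
    {μ : I → Option S} (hμ : IsFair P prio q μ) {i : I} {s : S} (hi : μ i = some s) :
    ∃ s', GS P prio q i = some s' ∧
      (acceptables (P i)).idxOf s' ≤ (acceptables (P i)).idxOf s := by
  have hle : daLimit P prio q i ≤ _ := daRun_le_idxOf_of_isFair hprio hnd hμ _ hi
  have hlt := hle.trans_lt (List.idxOf_lt_length_of_mem (hμ.mem_acceptables hi))
  refine ⟨_, by rw [GS_eq_daTarget hnd]; exact List.getElem?_eq_getElem hlt, ?_⟩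
  rwa [(hnd i).idxOf_getElem]

/-- Each outcome is at least as good as the other for every student, by optimality among fair
matchings. -/
theorem GS_eq_GS_of_isFair {P₁ P₂ : I → List (Option S)} (hprio : ∀ s, ValidPrio (prio s))
    (hnd : ∀ i, (acceptables (P₂ i)).Nodup)
    (hsub : ∀ i, (acceptables (P₁ i)).Sublist (acceptables (P₂ i)))
    (h₁ : IsFair P₂ prio q (GS P₁ prio q)) (h₂ : IsFair P₁ prio q (GS P₂ prio q)) :
    GS P₁ prio q = GS P₂ prio q := by
  have hnd₁ : ∀ i, (acceptables (P₁ i)).Nodup := fun i => (hsub i).nodup (hnd i)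
  funext i
  rcases e₁ : GS P₁ prio q i with _ | s₁
  · rcases e₂ : GS P₂ prio q i with _ | s₂
    · rfl
    · obtain ⟨s', hs', -⟩ := GS_le_of_isFair hprio hnd₁ h₂ e₂
      rw [e₁] at hs'
      cases hs'
  · obtain ⟨s₂, e₂, hle₂⟩ := GS_le_of_isFair hprio hnd h₁ e₁
    obtain ⟨s₁', e₁', hle₁⟩ := GS_le_of_isFair hprio hnd₁ h₂ e₂
    obtain rfl : s₁' = s₁ := Option.some_injective _ (e₁'.symm.trans e₁)
    have hs₁ := (isFair_GS hprio hnd₁).mem_acceptables e₁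
    have hle₁' := ((hsub i).idxOf_le_idxOf_iff (hnd i) hs₁ (h₂.mem_acceptables e₂)).1 hle₁
    rw [e₂, (List.idxOf_inj ((hsub i).subset hs₁)).1 (le_antisymm hle₁' hle₂)]

/-- Under either profile every fair matching fills a competitive school with its top `q s`
students only, so the students who drop it could not have obtained it anyway. -/
theorem GS_eq_GS_of_drop_competitive {P₁ P₂ : I → List (Option S)}
    (hprio : ∀ s, ValidPrio (prio s)) (hnd : ∀ i, (acceptables (P₂ i)).Nodup)
    (D : S → Prop) [DecidablePred D]
    (hdrop : ∀ i, acceptables (P₁ i) = acceptables (P₂ i) ∨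
      (acceptables (P₁ i) = (acceptables (P₂ i)).filter (fun s => ¬ D s) ∧
        ∀ s, D s → q s ≤ (prio s).idxOf i))
    (hD : ∀ s, D s → Competitive P₁ prio q s ∧ Competitive P₂ prio q s) :
    GS P₁ prio q = GS P₂ prio q := by
  have hsub : ∀ i, (acceptables (P₁ i)).Sublist (acceptables (P₂ i)) := fun i => by
    rcases hdrop i with h | ⟨h, -⟩ <;> rw [h]
    exact List.filter_sublist
  have hnd₁ : ∀ i, (acceptables (P₁ i)).Nodup := fun i => (hsub i).nodup (hnd i)
  have hdropped : ∀ {i s}, s ∈ acceptables (P₂ i) → s ∉ acceptables (P₁ i) →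
      D s ∧ ∀ s, D s → q s ≤ (prio s).idxOf i := fun {i s} hs₂ hs₁ => by
    rcases hdrop i with h | ⟨h, htop⟩
    · exact absurd (h ▸ hs₂) hs₁
    · refine ⟨by_contra fun hs => hs₁ ?_, htop⟩
      rw [h]
      exact List.mem_filter.2 ⟨hs₂, by simpa using hs⟩
  have hμ₁ := isFair_GS (q := q) hprio hnd₁
  have hμ₂ := isFair_GS (q := q) hprio hnd
  have hmem₂ : ∀ {i s}, GS P₂ prio q i = some s → s ∈ acceptables (P₁ i) := fun {i s} h => by
    by_contra hs₁
    obtain ⟨hDs, htop⟩ := hdropped (hμ₂.mem_acceptables h) hs₁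
    have := hμ₂.idxOf_lt_of_competitive (hD s hDs).2 h
    have := htop s hDs
    omega
  have hfair₁ : IsFair P₂ prio q (GS P₁ prio q) := by
    refine ⟨fun h => (hsub _).subset (hμ₁.mem_acceptables h), hμ₁.isMatching,
      fun {i k s} hs hpref hk => ?_⟩
    by_cases hs₁ : s ∈ acceptables (P₁ i)
    · refine hμ₁.noEnvy hs₁ (fun s₀ h₀ => ?_) hk
      exact ((hsub i).idxOf_lt_idxOf_iff (hnd i) hs₁ (hμ₁.mem_acceptables h₀)).2 (hpref s₀ h₀)
    · obtain ⟨hDs, htop⟩ := hdropped hs hs₁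
      have := hμ₁.idxOf_lt_of_competitive (hD s hDs).1 hk
      have := htop s hDs
      omega
  have hfair₂ : IsFair P₁ prio q (GS P₂ prio q) := by
    refine ⟨hmem₂, hμ₂.isMatching, fun {i k s} hs hpref hk => ?_⟩
    refine hμ₂.noEnvy ((hsub i).subset hs) (fun s₀ h₀ => ?_) hk
    exact ((hsub i).idxOf_lt_idxOf_iff (hnd i) hs (hmem₂ h₀)).1 (hpref s₀ h₀)
  exact GS_eq_GS_of_isFair hprio hnd hsub hfair₁ hfair₂

end GaleShapley

section SemiSophisticated

variable {I S : Type*} [Fintype I] [DecidableEq I] [DecidableEq S]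
  {P P' : I → List (Option S)} {prio : S → List I} {q : S → ℕ}

/-- The students guaranteed their first choice `s` are among the top `q s` at `s`, and there are
at least `q s` of them. -/
theorem guaranteedFirstChoice_of_competitive {s : S} (hv : ValidPrio (prio s))
    (hc : Competitive P prio q s) {i : I} (hi : (prio s).idxOf i < q s) :
    GuaranteedFirstChoice P prio q i s := by
  have hmem : ∀ j, j ∈ ((prio s).take (q s)).toFinset ↔ (prio s).idxOf j < q s := fun j => by
    rw [List.mem_toFinset, List.mem_take_iff_idxOf_lt (hv.2 j)]
  have hsub : Finset.univ.filter (fun j => GuaranteedFirstChoice P prio q j s) ⊆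
      ((prio s).take (q s)).toFinset := fun j hj => (hmem j).2 (Finset.mem_filter.1 hj).2.2
  have heq := Finset.eq_of_subset_of_card_le hsub <| calc
    _ ≤ _ := List.toFinset_card_le _
    _ ≤ q s := List.length_take_le _ _
    _ ≤ _ := hc
  have hi' := (hmem i).2 hi
  rw [← heq] at hi'
  exact (Finset.mem_filter.1 hi').2

theorem Competitive.of_head? {Q : I → List (Option S)} {s : S} (hc : Competitive P prio q s)
    (h : ∀ j, GuaranteedFirstChoice P prio q j s → (acceptables (Q j)).head? = some s) :
    Competitive Q prio q s :=
  hc.trans <| Finset.card_le_card fun j hj => by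
    have hj := (Finset.mem_filter.1 hj).2
    exact Finset.mem_filter.2 ⟨Finset.mem_univ _, h j hj, hj.2⟩

theorem SemiSophProfile.eq_or_filter {l : ℕ} (hNE : SemiSophProfile l P prio q P') (i : I) :
    P' i = P i ∨
      (acceptables (P' i) = (acceptables (P i)).filter (fun s => ¬ Competitive P prio q s) ∧
        ∀ s, ¬ GuaranteedFirstChoice P prio q i s) := by
  by_cases hg : ∃ s, GuaranteedFirstChoice P prio q i s
  · exact .inl ((hNE i).1 hg)
  by_cases hc : (acceptables (P i)).length ≤ l ∨
      ∀ s ∈ acceptables (P i), Competitive P prio q s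
  · exact .inl (((hNE i).2 hg).1 hc)
  · exact .inr ⟨((hNE i).2 hg).2 hc, not_exists.1 hg⟩

theorem filter_dropped_prefLt_eq (C : S → Prop) [DecidablePred C] {p p' : List (Option S)}
    (h : acceptables p' = (acceptables p).filter (fun s => ¬ C s)) (l : ℕ) :
    (acceptables p).filter (fun s => C s ∧ s ∉ acceptables p' ∧
        ∃ s' ∈ (acceptables p').take l, prefLt p (some s) (some s')) =
      (acceptables p).filter (fun s => C s ∧
        ∃ s' ∈ ((acceptables p).filter (fun s => ¬ C s)).take l,
          (acceptables p).idxOf s < (acceptables p).idxOf s') := by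
  rw [h]
  refine List.filter_congr fun s hs => decide_eq_decide.2 <| and_congr_right fun hC => ?_
  have hdropped : s ∉ (acceptables p).filter (fun s => ¬ C s) := by simp [hC]
  rw [iff_true_intro hdropped, true_and]
  exact exists_congr fun s' => and_congr_right fun hs' =>
    prefLt_some_iff hs (List.mem_of_mem_filter (List.take_subset _ _ hs'))

theorem SemiSophProfile.take_eq_or_filter {l : ℕ} (hNE : SemiSophProfile l P prio q P')
    (hprio : ∀ s, ValidPrio (prio s)) {i : I} (hP : (P i).Nodup) {r : ℕ}
    (hr : r = ((acceptables (P i)).filter (fun s => decide (Competitive P prio q s ∧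
          s ∉ acceptables (P' i) ∧
          ∃ s' ∈ (acceptables (P' i)).take l,
            prefLt (P i) (some s) (some s')))).length) :
    (acceptables (P' i)).take l = (acceptables (P i)).take (l + r) ∨
      ((acceptables (P' i)).take l =
          ((acceptables (P i)).take (l + r)).filter (fun s => ¬ Competitive P prio q s) ∧
        ∀ s, Competitive P prio q s → q s ≤ (prio s).idxOf i) := by
  rcases hNE.eq_or_filter i with heq | ⟨hfilter, hng⟩
  · left
    have hr0 : r = 0 := by
      rw [hr, heq, List.length_eq_zero_iff, List.filter_eq_nil_iff]
      intro s hs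
      simp [hs]
    rw [hr0, heq, Nat.add_zero]
  · right
    refine ⟨?_, fun s hs => not_lt.1 fun hi => hng s ?_⟩
    · rw [hr, filter_dropped_prefLt_eq _ hfilter, hfilter]
      exact List.take_filter_eq_filter_take_add _ (nodup_acceptables hP) l
    · exact guaranteedFirstChoice_of_competitive (hprio s) hs hi

end SemiSophisticated

theorem semi_sophisticated_equilibrium_outcome_general
    {I S : Type*} [Fintype I] [DecidableEq I] [Fintype S] [DecidableEq S]
    (l : ℕ) (hl : 1 < l)
    (P : I → List (Option S)) (prio : S → List I) (q : S → ℕ)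
    (hP : ∀ i, ValidPref (P i)) (hprio : ∀ s, ValidPrio (prio s))
    (P' : I → List (Option S))
    (hNE : SemiSophProfile l P prio q P')
    (r : I → ℕ)
    (hr : ∀ i : I, r i =
      ((acceptables (P i)).filter (fun s => decide (Competitive P prio q s ∧
          s ∉ acceptables (P' i) ∧
          ∃ s' ∈ (acceptables (P' i)).take l,
            prefLt (P i) (some s) (some s')))).length) :
    GSk l P' prio q = GS (fun i => truncate (P i) (l + r i)) prio q := by
  refine GS_eq_GS_of_drop_competitive hprio (fun i => ?_) (Competitive P prio q)
    (fun i => ?_) (fun s hs => ⟨hs.of_head? fun j hj => ?_, hs.of_head? fun j hj => ?_⟩)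
  · rw [acceptables_truncate]
    exact (List.take_sublist _ _).nodup (nodup_acceptables (hP i).1)
  · simp only [acceptables_truncate]
    exact hNE.take_eq_or_filter hprio (hP i).1 (hr i)
  · rw [acceptables_truncate, (hNE j).1 ⟨s, hj⟩, List.head?_take, if_neg (by omega), hj.1]
  · rw [acceptables_truncate, List.head?_take, if_neg (by omega), hj.1]

/-- Lemma 5: let `ℓ > 1` and let `P'` be a Nash equilibrium of the
game `(GS^ℓ, P)` with semi-sophisticated students.  For each student `i` let `rᵢ` be the
number of competitive schools that `i` has dropped under `P'ᵢ` but prefers to at least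
one of the top `ℓ` acceptable schools she lists under `P'ᵢ`.  Then
`GS^ℓ(P',≻,q) = GS(P^k̄,≻,q)` where `k̄ᵢ = ℓ + rᵢ`. -/
theorem semi_sophisticated_equilibrium_outcome
    {I S : Type*} [Fintype I] [DecidableEq I] [Fintype S] [DecidableEq S]
    (hIS : Fintype.card S < Fintype.card I)
    (l : ℕ) (hl : 1 < l)
    (P : I → List (Option S)) (prio : S → List I) (q : S → ℕ)
    (hP : ∀ i, ValidPref (P i)) (hprio : ∀ s, ValidPrio (prio s))
    (P' : I → List (Option S)) (hP' : ∀ i, ValidPref (P' i))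
    (hNE : SemiSophProfile l P prio q P')
    (r : I → ℕ)
    (hr : ∀ i : I, r i =
      ((acceptables (P i)).filter (fun s => decide (Competitive P prio q s ∧
          s ∉ acceptables (P' i) ∧
          ∃ s' ∈ (acceptables (P' i)).take l,
            prefLt (P i) (some s) (some s')))).length) :
    GSk l P' prio q = GS (fun i => truncate (P i) (l + r i)) prio q :=
  semi_sophisticated_equilibrium_outcome_general l hl P prio q hP hprio P' hNE r hr

end SchoolChoice
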